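/- Let 0 ≤ β < 1 and let f be a bi-starlike function of order β, i.e. f is bi-univalent with inverse extension F and both zf'(z)/f(z) ≺ (1+(1−2β)z)/(1−z) and wF'(w)/F(w) ≺ (1+(1−2β)w)/(1−w) (equivalently, Re(zf'(z)/f(z)) > β and Re(wF'(w)/F(w)) > β on 𝔻). Then the second Taylor coefficient of f satisfies |a₂| ≤ min{ √(2(1−β)), √((1−β)(3−2β)) }; in particular |a₂| ≤ √(2(1−β)) for 0 ≤ β ≤ 1/2 and |a₂| ≤ √((1−β)(3−2β)) for 1/2 ≤ β < 1. -/

import Mathlib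

/-!
Put `h = z f'/f` and `H = w F'/F`. Since `F ∘ f = id` near `0`, we have `(H ∘ f) · h = 1`, and
differentiating twice at `0` gives `h''(0) + H''(0) = f''(0)² = 4 a₂²`, while `h'(0) = a₂`.
A function `h` with `h(0) = 1` and `Re h > β` on the disc has the Cayley transform
`φ = (h - 1) / (h + 1 - 2β)`, a self-map of the disc vanishing at `0`; the Schwarz lemma for `φ`
and the Schwarz–Pick lemma for `φ(z)/z` give `|h'(0)| ≤ 2(1-β)` and `|h''(0)| ≤ 4(1-β)`.
Hence `|a₂|² ≤ 2(1-β)` and `|a₂| ≤ 2(1-β)`; for `β ≥ 1/2` the latter gives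
`|a₂|² ≤ 4(1-β)² ≤ (1-β)(3-2β)`.
-/

open Metric Set Complex
open Filter Topology ComplexConjugate

noncomputable section

section SecondDerivative

variable {𝕜 : Type*} [NontriviallyNormedField 𝕜] {p q : 𝕜 → 𝕜} {x c : 𝕜}

theorem iteratedDeriv_two_fun_mul (hp : ContDiffAt 𝕜 2 p x) (hq : ContDiffAt 𝕜 2 q x) :
    iteratedDeriv 2 (fun z => p z * q z) x =
      iteratedDeriv 2 p x * q x + 2 * (deriv p x * deriv q x) + p x * iteratedDeriv 2 q x := by
  rw [iteratedDeriv_fun_mul hp hq]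
  simp only [Nat.reduceAdd, Finset.sum_range_succ, Finset.range_one, Finset.sum_singleton,
    Nat.choose_zero_right, Nat.cast_one, iteratedDeriv_zero, one_mul, tsub_zero,
    Nat.choose_succ_self_right, Nat.cast_ofNat, iteratedDeriv_one, Nat.add_one_sub_one,
    Nat.choose_self, tsub_self]
  ring

theorem deriv_mul_add_mul_deriv_eq_zero_of_eventuallyEq_const (hp : DifferentiableAt 𝕜 p x)
    (hq : DifferentiableAt 𝕜 q x) (hpq : (fun z => p z * q z) =ᶠ[𝓝 x] fun _ => c) :
    deriv p x * q x + p x * deriv q x = 0 := by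
  rw [← deriv_fun_mul hp hq, hpq.deriv_eq, deriv_const]

theorem iteratedDeriv_two_mul_add_eq_zero_of_eventuallyEq_const (hp : ContDiffAt 𝕜 2 p x)
    (hq : ContDiffAt 𝕜 2 q x) (hpq : (fun z => p z * q z) =ᶠ[𝓝 x] fun _ => c) :
    iteratedDeriv 2 p x * q x + 2 * (deriv p x * deriv q x) + p x * iteratedDeriv 2 q x = 0 := by
  rw [← iteratedDeriv_two_fun_mul hp hq, hpq.iteratedDeriv_eq, iteratedDeriv_const]
  simp

end SecondDerivative

theorem iteratedDeriv_two_eq_two_mul_deriv_dslope {f : ℂ → ℂ} {s : Set ℂ} {a : ℂ}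
    (hf : DifferentiableOn ℂ f s) (hs : s ∈ 𝓝 a) :
    iteratedDeriv 2 f a = 2 * deriv (dslope f a) a := by
  have hu : AnalyticAt ℂ (dslope f a) a := ((differentiableOn_dslope hs).mpr hf).analyticAt hs
  have hfu : f = fun z => f a + (z - a) * dslope f a z := funext fun z =>
    eq_add_of_sub_eq' (by simpa [smul_eq_mul] using (sub_smul_dslope f a z).symm)
  conv_lhs => rw [hfu]
  rw [iteratedDeriv_const_add two_pos,
    iteratedDeriv_two_fun_mul (by fun_prop) hu.contDiffAt]
  simp [iteratedDeriv_succ]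

theorem eventually_deriv_comp_mul_deriv_eq_one {f F : ℂ → ℂ} {a : ℂ} (hf : AnalyticAt ℂ f a)
    (hF : AnalyticAt ℂ F (f a)) (hFf : ∀ᶠ z in 𝓝 a, F (f z) = z) :
    ∀ᶠ z in 𝓝 a, deriv F (f z) * deriv f z = 1 := by
  have hid : deriv (fun z => F (f z)) =ᶠ[𝓝 a] deriv id := EventuallyEq.deriv hFf
  filter_upwards [hid, hf.eventually_analyticAt,
    hf.continuousAt.eventually hF.eventually_analyticAt] with z hz hfz hFz
  rw [← deriv_comp z hFz.differentiableAt hfz.differentiableAt]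
  exact hz.trans (deriv_id z)

theorem norm_sub_le_norm_one_sub_conj_mul {a w : ℂ} (ha : ‖a‖ ≤ 1) (hw : ‖w‖ ≤ 1) :
    ‖w - a‖ ≤ ‖1 - conj a * w‖ := by
  have key : ‖1 - conj a * w‖ ^ 2 - ‖w - a‖ ^ 2 = (1 - ‖a‖ ^ 2) * (1 - ‖w‖ ^ 2) := by
    simp only [Complex.sq_norm, Complex.normSq_apply, Complex.sub_re, Complex.sub_im,
      Complex.mul_re, Complex.mul_im, Complex.conj_re, Complex.conj_im, Complex.one_re,
      Complex.one_im]
    ring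
  rw [← sq_le_sq₀ (norm_nonneg _) (norm_nonneg _)]
  nlinarith [mul_nonneg (sub_nonneg.mpr (pow_le_one₀ (n := 2) (norm_nonneg a) ha))
    (sub_nonneg.mpr (pow_le_one₀ (n := 2) (norm_nonneg w) hw))]

theorem norm_deriv_le_one_sub_sq_of_mapsTo_closedBall {ψ : ℂ → ℂ}
    (hd : DifferentiableOn ℂ ψ (ball 0 1)) (hm : MapsTo ψ (ball 0 1) (closedBall 0 1)) :
    ‖deriv ψ 0‖ ≤ 1 - ‖ψ 0‖ ^ 2 := by
  have h0 : (0 : ℂ) ∈ ball (0 : ℂ) 1 := mem_ball_self one_pos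
  have hψ1 : ∀ z ∈ ball (0 : ℂ) 1, ‖ψ z‖ ≤ 1 := fun z hz => by simpa using hm hz
  set a := ψ 0 with ha_def
  rcases (hψ1 0 h0).lt_or_eq with ha | ha
  · have hden : ∀ z ∈ ball (0 : ℂ) 1, 1 - conj a * ψ z ≠ 0 := fun z hz H => by
      have : ‖conj a * ψ z‖ < 1 := by
        rw [norm_mul, RCLike.norm_conj]
        nlinarith [hψ1 z hz, norm_nonneg a, norm_nonneg (ψ z)]
      rw [← sub_eq_zero.mp H] at this
      simp at this
    set k : ℂ → ℂ := fun z => (ψ z - a) / (1 - conj a * ψ z)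
    have hk : DifferentiableOn ℂ k (ball 0 1) :=
      (hd.sub_const a).div ((hd.const_mul _).const_sub 1) hden
    have hkm : MapsTo k (ball 0 1) (closedBall (k 0) 1) := fun z hz => by
      rw [show k 0 = 0 by simp [k, a], mem_closedBall_zero_iff, norm_div,
        div_le_one (norm_pos_iff.mpr (hden z hz))]
      exact norm_sub_le_norm_one_sub_conj_mul ha.le (hψ1 z hz)
    have hψ0 : DifferentiableAt ℂ ψ 0 := hd.differentiableAt (ball_mem_nhds 0 one_pos)
    have hpos : 0 < 1 - ‖a‖ ^ 2 := by nlinarith [norm_nonneg a]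
    have hconj : 1 - conj a * a = ((1 - ‖a‖ ^ 2 : ℝ) : ℂ) := by
      rw [mul_comm, Complex.mul_conj, Complex.normSq_eq_norm_sq]
      push_cast
      ring
    have hderiv : deriv k 0 = deriv ψ 0 / ((1 - ‖a‖ ^ 2 : ℝ) : ℂ) := by
      have hne : ((1 - ‖a‖ ^ 2 : ℝ) : ℂ) ≠ 0 := by exact_mod_cast hpos.ne'
      rw [deriv_fun_div (hψ0.sub_const a) ((hψ0.const_mul _).const_sub 1) (hden 0 h0),
        deriv_sub_const, deriv_const_sub, deriv_const_mul _ hψ0, ← ha_def, sub_self, hconj]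
      field_simp
      ring
    have hk1 := Complex.norm_deriv_le_one_of_mapsTo_ball hk hkm one_pos
    rwa [hderiv, norm_div, Complex.norm_real, Real.norm_of_nonneg hpos.le,
      div_le_one hpos] at hk1
  · have hmax : IsMaxOn (norm ∘ ψ) (ball 0 1) 0 := fun z hz => by simpa [ha] using hψ1 z hz
    have hconst := Complex.eqOn_of_isPreconnected_of_isMaxOn_norm
      (convex_ball (0 : ℂ) 1).isPreconnected isOpen_ball hd h0 hmax
    rw [(hconst.eventuallyEq_of_mem (ball_mem_nhds 0 one_pos)).deriv_eq, ha_def, ha]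
    show ‖deriv (fun _ : ℂ => ψ 0) 0‖ ≤ 1 - 1 ^ 2
    simp

theorem norm_iteratedDeriv_two_le_of_mapsTo_ball {φ : ℂ → ℂ}
    (hd : DifferentiableOn ℂ φ (ball 0 1)) (hm : MapsTo φ (ball 0 1) (closedBall (φ 0) 1)) :
    ‖iteratedDeriv 2 φ 0‖ ≤ 2 * (1 - ‖deriv φ 0‖ ^ 2) := by
  have hψm : MapsTo (dslope φ 0) (ball 0 1) (closedBall 0 1) := fun z hz => by
    simpa using Complex.norm_dslope_le_div_of_mapsTo_ball hd hm hz
  have hψ := norm_deriv_le_one_sub_sq_of_mapsTo_closedBall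
    ((differentiableOn_dslope (ball_mem_nhds 0 one_pos)).mpr hd) hψm
  rw [dslope_same] at hψ
  rw [iteratedDeriv_two_eq_two_mul_deriv_dslope hd (ball_mem_nhds 0 one_pos), norm_mul,
    Complex.norm_two]
  linarith

theorem norm_sub_one_lt_norm_add_of_lt_re {β : ℝ} {w : ℂ} (hβ : β < 1) (hw : β < w.re) :
    ‖w - 1‖ < ‖((1 - 2 * β : ℝ) : ℂ) + w‖ := by
  have key : ‖((1 - 2 * β : ℝ) : ℂ) + w‖ ^ 2 - ‖w - 1‖ ^ 2 = 4 * (1 - β) * (w.re - β) := by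
    simp only [Complex.sq_norm, Complex.normSq_apply, Complex.add_re, Complex.add_im,
      Complex.sub_re, Complex.sub_im, Complex.ofReal_re, Complex.ofReal_im, Complex.one_re,
      Complex.one_im]
    ring
  rw [← sq_lt_sq₀ (norm_nonneg _) (norm_nonneg _)]
  nlinarith [mul_pos (sub_pos.mpr hβ) (sub_pos.mpr hw)]

theorem norm_deriv_le_and_norm_iteratedDeriv_two_le_of_lt_re {β : ℝ} {h : ℂ → ℂ}
    (hd : DifferentiableOn ℂ h (ball 0 1)) (h0 : h 0 = 1)
    (hre : ∀ z ∈ ball (0 : ℂ) 1, β < (h z).re) :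
    ‖deriv h 0‖ ≤ 2 * (1 - β) ∧ ‖iteratedDeriv 2 h 0‖ ≤ 4 * (1 - β) := by
  have hball : ball (0 : ℂ) 1 ∈ 𝓝 0 := ball_mem_nhds 0 one_pos
  have hβ : β < 1 := by simpa [h0] using hre 0 (mem_of_mem_nhds hball)
  set c : ℂ := ((1 - 2 * β : ℝ) : ℂ)
  have hlt : ∀ z ∈ ball (0 : ℂ) 1, ‖h z - 1‖ < ‖c + h z‖ := fun z hz =>
    norm_sub_one_lt_norm_add_of_lt_re hβ (hre z hz)
  have hden : ∀ z ∈ ball (0 : ℂ) 1, c + h z ≠ 0 := fun z hz =>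
    norm_pos_iff.mp ((norm_nonneg _).trans_lt (hlt z hz))
  set φ : ℂ → ℂ := fun z => (h z - 1) / (c + h z)
  have hφd : DifferentiableOn ℂ φ (ball 0 1) := (hd.sub_const 1).div (hd.const_add c) hden
  have hφm : MapsTo φ (ball 0 1) (closedBall (φ 0) 1) := fun z hz => by
    rw [show φ 0 = 0 by simp [φ, h0], mem_closedBall_zero_iff, norm_div,
      div_le_one (norm_pos_iff.mpr (hden z hz))]
    exact (hlt z hz).le
  have hprod : (fun z => (c + h z) * (1 - φ z)) =ᶠ[𝓝 0] fun _ => c + 1 := by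
    filter_upwards [hball] with z hz
    simp only [φ]
    field_simp [hden z hz]
    ring
  have hh : AnalyticAt ℂ (fun z => c + h z) 0 := analyticAt_const.add (hd.analyticAt hball)
  have hφ : AnalyticAt ℂ (fun z => 1 - φ z) 0 := analyticAt_const.sub (hφd.analyticAt hball)
  have e1 := deriv_mul_add_mul_deriv_eq_zero_of_eventuallyEq_const
    hh.differentiableAt hφ.differentiableAt hprod
  have e2 := iteratedDeriv_two_mul_add_eq_zero_of_eventuallyEq_const
    hh.contDiffAt hφ.contDiffAt hprod
  simp only [deriv_const_add, deriv_const_sub, iteratedDeriv_const_add two_pos,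
    iteratedDeriv_const_sub two_pos, iteratedDeriv_neg, h0, show φ 0 = 0 by simp [φ, h0]] at e1 e2
  have hd1 : deriv h 0 = ((2 * (1 - β) : ℝ) : ℂ) * deriv φ 0 := by
    push_cast [c] at e1 ⊢
    linear_combination e1
  have hd2 : iteratedDeriv 2 h 0 =
      ((2 * (1 - β) : ℝ) : ℂ) * (iteratedDeriv 2 φ 0 + 2 * deriv φ 0 ^ 2) := by
    push_cast [c] at e2 hd1 ⊢
    linear_combination e2 + 2 * deriv φ 0 * hd1
  have hφ1 := Complex.norm_deriv_le_one_of_mapsTo_ball hφd hφm one_pos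
  have hφ2 := norm_iteratedDeriv_two_le_of_mapsTo_ball hφd hφm
  have hβ' : 0 ≤ 2 * (1 - β) := by linarith
  rw [hd1, hd2, norm_mul, norm_mul, Complex.norm_real, Real.norm_of_nonneg hβ']
  constructor
  · nlinarith
  · have : ‖iteratedDeriv 2 φ 0 + 2 * deriv φ 0 ^ 2‖ ≤ 2 :=
      (norm_add_le _ _).trans (by rw [norm_mul, norm_pow, Complex.norm_two]; linarith)
    nlinarith

section StarlikeQuotient

variable {U : Set ℂ} {f F : ℂ → ℂ}

/-- For `f 0 = 0`, the analytic extension across `0` of `z * deriv f z / f z`. -/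
def starlikeQuotient (f : ℂ → ℂ) (z : ℂ) : ℂ :=
  deriv f z / dslope f 0 z

theorem starlikeQuotient_zero (hf1 : deriv f 0 ≠ 0) : starlikeQuotient f 0 = 1 := by
  simp [starlikeQuotient, hf1]

theorem starlikeQuotient_of_ne_zero (hf0 : f 0 = 0) {z : ℂ} (hz : z ≠ 0) :
    starlikeQuotient f z = z * deriv f z / f z := by
  rw [starlikeQuotient, dslope_of_ne _ hz, slope_def_field, hf0, sub_zero, sub_zero,
    div_div_eq_mul_div, mul_comm]

theorem dslope_ne_zero_of_injOn (hfi : InjOn f U) (h0 : (0 : ℂ) ∈ U)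
    (hf1 : deriv f 0 ≠ 0) {z : ℂ} (hz : z ∈ U) : dslope f 0 z ≠ 0 := by
  rcases eq_or_ne z 0 with rfl | hz0
  · rwa [dslope_same]
  · rw [dslope_of_ne _ hz0, slope_def_field]
    exact div_ne_zero (sub_ne_zero.mpr fun h => hz0 (hfi hz h0 h)) (sub_ne_zero.mpr hz0)

theorem differentiableOn_starlikeQuotient (hU : IsOpen U) (h0 : (0 : ℂ) ∈ U)
    (hf : DifferentiableOn ℂ f U) (hfi : InjOn f U) (hf1 : deriv f 0 ≠ 0) :
    DifferentiableOn ℂ (starlikeQuotient f) U :=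
  (hf.deriv hU).div ((differentiableOn_dslope (hU.mem_nhds h0)).mpr hf) fun _ hz =>
    dslope_ne_zero_of_injOn hfi h0 hf1 hz

theorem deriv_starlikeQuotient_zero (hU : IsOpen U) (h0 : (0 : ℂ) ∈ U)
    (hf : DifferentiableOn ℂ f U) (hfi : InjOn f U) (hf1 : deriv f 0 = 1) :
    deriv (starlikeQuotient f) 0 = iteratedDeriv 2 f 0 / 2 := by
  have hU0 : U ∈ 𝓝 0 := hU.mem_nhds h0
  have hu : AnalyticAt ℂ (dslope f 0) 0 :=
    ((differentiableOn_dslope hU0).mpr hf).analyticAt hU0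
  have hh : AnalyticAt ℂ (starlikeQuotient f) 0 :=
    (differentiableOn_starlikeQuotient hU h0 hf hfi (by simp [hf1])).analyticAt hU0
  have hprod : (fun z => starlikeQuotient f z * dslope f 0 z) =ᶠ[𝓝 0] deriv f := by
    filter_upwards [hU0] with z hz
    exact div_mul_cancel₀ _ (dslope_ne_zero_of_injOn hfi h0 (by simp [hf1]) hz)
  have key := hprod.deriv_eq
  rw [deriv_fun_mul hh.differentiableAt hu.differentiableAt, starlikeQuotient_zero (by simp [hf1]),
    dslope_same, hf1] at key
  have hf2 : deriv (deriv f) 0 = 2 * deriv (dslope f 0) 0 := by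
    rw [← iteratedDeriv_two_eq_two_mul_deriv_dslope hf hU0, iteratedDeriv_succ, iteratedDeriv_one]
  rw [iteratedDeriv_two_eq_two_mul_deriv_dslope hf hU0]
  linear_combination key + hf2

theorem deriv_eq_one_of_comp_eventuallyEq_id (hf : AnalyticAt ℂ f 0) (hF : AnalyticAt ℂ F 0)
    (hf0 : f 0 = 0) (hf1 : deriv f 0 = 1) (hFf : ∀ᶠ z in 𝓝 0, F (f z) = z) :
    deriv F 0 = 1 := by
  simpa [hf0, hf1] using
    (eventually_deriv_comp_mul_deriv_eq_one hf (by rwa [hf0]) hFf).self_of_nhds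

theorem starlikeQuotient_comp_mul_starlikeQuotient_eventuallyEq_one (hf : AnalyticAt ℂ f 0)
    (hF : AnalyticAt ℂ F 0) (hf0 : f 0 = 0) (hF0 : F 0 = 0) (hFf : ∀ᶠ z in 𝓝 0, F (f z) = z) :
    (fun z => (starlikeQuotient F ∘ f) z * starlikeQuotient f z) =ᶠ[𝓝 0] fun _ => 1 := by
  have hchain := eventually_deriv_comp_mul_deriv_eq_one hf (by rwa [hf0]) hFf
  have h1 : deriv F 0 * deriv f 0 = 1 := by simpa [hf0] using hchain.self_of_nhds
  filter_upwards [hchain, hFf] with z hz hFz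
  rcases eq_or_ne z 0 with rfl | hz0
  · simp [hf0, starlikeQuotient_zero (left_ne_zero_of_mul_eq_one h1),
      starlikeQuotient_zero (right_ne_zero_of_mul_eq_one h1)]
  · have hfz : f z ≠ 0 := fun h => hz0 (by rw [← hFz, h, hF0])
    rw [Function.comp_apply, starlikeQuotient_of_ne_zero hF0 hfz,
      starlikeQuotient_of_ne_zero hf0 hz0, hFz]
    field_simp
    linear_combination hz

theorem iteratedDeriv_two_starlikeQuotient_add_of_comp_eventuallyEq_id (hU : IsOpen U)
    (h0 : (0 : ℂ) ∈ U) (hf : DifferentiableOn ℂ f U) (hF : DifferentiableOn ℂ F U)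
    (hf0 : f 0 = 0) (hF0 : F 0 = 0) (hf1 : deriv f 0 = 1) (hfi : InjOn f U) (hFi : InjOn F U)
    (hFf : ∀ᶠ z in 𝓝 0, F (f z) = z) :
    iteratedDeriv 2 (starlikeQuotient f) 0 + iteratedDeriv 2 (starlikeQuotient F) 0 =
      iteratedDeriv 2 f 0 ^ 2 := by
  have hU0 : U ∈ 𝓝 0 := hU.mem_nhds h0
  have hfa := hf.analyticAt hU0
  have hFa := hF.analyticAt hU0
  have hF1 := deriv_eq_one_of_comp_eventuallyEq_id hfa hFa hf0 hf1 hFf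
  have hh := (differentiableOn_starlikeQuotient hU h0 hf hfi (by simp [hf1])).analyticAt hU0
  have hH : AnalyticAt ℂ (starlikeQuotient F) (f 0) := by
    rw [hf0]
    exact (differentiableOn_starlikeQuotient hU h0 hF hFi (by simp [hF1])).analyticAt hU0
  have hprod := starlikeQuotient_comp_mul_starlikeQuotient_eventuallyEq_one hfa hFa hf0 hF0 hFf
  have e1 := deriv_mul_add_mul_deriv_eq_zero_of_eventuallyEq_const
    (hH.comp hfa).differentiableAt hh.differentiableAt hprod
  have e2 := iteratedDeriv_two_mul_add_eq_zero_of_eventuallyEq_const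
    (hH.comp hfa).contDiffAt hh.contDiffAt hprod
  rw [iteratedDeriv_comp_two hH.contDiffAt hfa.contDiffAt] at e2
  rw [deriv_comp 0 hH.differentiableAt hfa.differentiableAt] at e1 e2
  simp only [Function.comp_apply, hf0, hf1, starlikeQuotient_zero (by simp [hf1] : deriv f 0 ≠ 0),
    starlikeQuotient_zero (by simp [hF1] : deriv F 0 ≠ 0)] at e1 e2
  have hd := deriv_starlikeQuotient_zero hU h0 hf hfi hf1
  linear_combination e2 - (iteratedDeriv 2 f 0 + 2 * deriv (starlikeQuotient f) 0) * e1
    + (2 * deriv (starlikeQuotient f) 0 + 2 * iteratedDeriv 2 f 0) * hd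

theorem norm_deriv_starlikeQuotient_le_and_norm_iteratedDeriv_two_le {β : ℝ} (hβ : β < 1)
    (hf : DifferentiableOn ℂ f (ball 0 1)) (hf0 : f 0 = 0) (hf1 : deriv f 0 ≠ 0)
    (hfi : InjOn f (ball 0 1))
    (hre : ∀ z ∈ ball (0 : ℂ) 1, z ≠ 0 → β < (z * deriv f z / f z).re) :
    ‖deriv (starlikeQuotient f) 0‖ ≤ 2 * (1 - β) ∧
      ‖iteratedDeriv 2 (starlikeQuotient f) 0‖ ≤ 4 * (1 - β) := by
  refine norm_deriv_le_and_norm_iteratedDeriv_two_le_of_lt_re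
    (differentiableOn_starlikeQuotient isOpen_ball (mem_ball_self one_pos) hf hfi hf1)
    (starlikeQuotient_zero hf1) fun z hz => ?_
  rcases eq_or_ne z 0 with rfl | hz0
  · simpa [starlikeQuotient_zero hf1] using hβ
  · rw [starlikeQuotient_of_ne_zero hf0 hz0]
    exact hre z hz hz0

end StarlikeQuotient

theorem le_min_sqrt_of_sq_le_of_le {β t : ℝ} (ht : 0 ≤ t) (h2 : t ^ 2 ≤ 2 * (1 - β))
    (h1 : t ≤ 2 * (1 - β)) : t ≤ min (√(2 * (1 - β))) (√((1 - β) * (3 - 2 * β))) := by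
  refine le_min (Real.le_sqrt_of_sq_le h2) (Real.le_sqrt_of_sq_le ?_)
  rcases le_total β (1 / 2) with hβ | hβ
  · nlinarith
  · nlinarith

theorem stmt6_general (β : ℝ) (hβ1 : β < 1)
    (f F : ℂ → ℂ)
    (hf : DifferentiableOn ℂ f (ball 0 1)) (hf0 : f 0 = 0) (hf1 : deriv f 0 = 1)
    (hfi : InjOn f (ball 0 1))
    (hF : DifferentiableOn ℂ F (ball 0 1)) (hF0 : F 0 = 0) (hFi : InjOn F (ball 0 1))
    (hFf : ∀ᶠ z in nhds (0 : ℂ), F (f z) = z)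
    (g : ℂ → ℂ)
    (hgf : ∀ z ∈ ball (0 : ℂ) 1, z ≠ 0 → g z = z * deriv f z / f z)
    (hgre : ∀ z ∈ ball (0 : ℂ) 1, β < (g z).re)
    (G : ℂ → ℂ)
    (hGF : ∀ w ∈ ball (0 : ℂ) 1, w ≠ 0 → G w = w * deriv F w / F w)
    (hGre : ∀ w ∈ ball (0 : ℂ) 1, β < (G w).re) :
    ‖iteratedDeriv 2 f 0 / 2‖ ≤ min (Real.sqrt (2 * (1 - β))) (Real.sqrt ((1 - β) * (3 - 2 * β))) := by
  have h0 : (0 : ℂ) ∈ ball (0 : ℂ) 1 := mem_ball_self one_pos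
  have hF1 := deriv_eq_one_of_comp_eventuallyEq_id (hf.analyticAt (ball_mem_nhds 0 one_pos))
    (hF.analyticAt (ball_mem_nhds 0 one_pos)) hf0 hf1 hFf
  obtain ⟨hh1, hh2⟩ := norm_deriv_starlikeQuotient_le_and_norm_iteratedDeriv_two_le hβ1 hf hf0
    (by simp [hf1]) hfi fun z hz hz0 => hgf z hz hz0 ▸ hgre z hz
  obtain ⟨-, hH2⟩ := norm_deriv_starlikeQuotient_le_and_norm_iteratedDeriv_two_le hβ1 hF hF0
    (by simp [hF1]) hFi fun w hw hw0 => hGF w hw hw0 ▸ hGre w hw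
  have hsq : ‖iteratedDeriv 2 f 0 ^ 2‖ ≤ 8 * (1 - β) := by
    rw [← iteratedDeriv_two_starlikeQuotient_add_of_comp_eventuallyEq_id isOpen_ball h0 hf hF
      hf0 hF0 hf1 hfi hFi hFf]
    linarith [norm_add_le (iteratedDeriv 2 (starlikeQuotient f) 0)
      (iteratedDeriv 2 (starlikeQuotient F) 0)]
  rw [deriv_starlikeQuotient_zero isOpen_ball h0 hf hfi hf1] at hh1
  refine le_min_sqrt_of_sq_le_of_le (norm_nonneg _) ?_ hh1
  rw [norm_div, Complex.norm_two, div_pow, ← norm_pow]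
  linarith

theorem stmt6 (β : ℝ) (hβ0 : 0 ≤ β) (hβ1 : β < 1)
    (f F : ℂ → ℂ)
    (hf : DifferentiableOn ℂ f (ball 0 1)) (hf0 : f 0 = 0) (hf1 : deriv f 0 = 1)
    (hfi : InjOn f (ball 0 1))
    (hF : DifferentiableOn ℂ F (ball 0 1)) (hF0 : F 0 = 0) (hFi : InjOn F (ball 0 1))
    (hFf : ∀ᶠ z in nhds (0 : ℂ), F (f z) = z)
    (g : ℂ → ℂ) (hg0 : g 0 = 1)
    (hgf : ∀ z ∈ ball (0 : ℂ) 1, z ≠ 0 → g z = z * deriv f z / f z)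
    (hgre : ∀ z ∈ ball (0 : ℂ) 1, β < (g z).re)
    (G : ℂ → ℂ) (hG0 : G 0 = 1)
    (hGF : ∀ w ∈ ball (0 : ℂ) 1, w ≠ 0 → G w = w * deriv F w / F w)
    (hGre : ∀ w ∈ ball (0 : ℂ) 1, β < (G w).re) :
    ‖iteratedDeriv 2 f 0 / 2‖ ≤ min (Real.sqrt (2 * (1 - β))) (Real.sqrt ((1 - β) * (3 - 2 * β))) :=
  stmt6_general β hβ1 f F hf hf0 hf1 hfi hF hF0 hFi hFf g hgf hgre G hGF hGre
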